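/- Let p be an odd prime and q = (2^(p-1) - 1)/p. Then in ZMod p, 2·S_1 = 2q, where S_1 is the sum of the inverses of the odd integers i with 0 < i < p; equivalently, 2^p ≡ 2 + p·(S_1 - S_0) (mod p^2), where S_0 and S_1 are the corresponding sums of inverses in ZMod p^2 over even and odd i with 0 < i < p respectively. -/
import Mathlib

lemma choose_pred_eq (p : ℕ) (hp : p.Prime) : ∀ k, k < p → (((p-1).choose k : ZMod p) = (-1)^k) := by
  intro k
  induction k with
  | zero => simp
  | succ k ih =>
    intro hk
    have h1 : (p-1).choose k + (p-1).choose (k+1) = p.choose (k+1) := by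
      have h := Nat.choose_succ_succ' (p-1) k
      have : p - 1 + 1 = p := Nat.succ_pred_eq_of_pos hp.pos
      rw [this] at h
      omega
    have h2 : (p.choose (k+1) : ZMod p) = 0 := by
      rw [ZMod.natCast_eq_zero_iff]
      exact hp.dvd_choose_self (Nat.succ_ne_zero k) hk
    have h3 := ih (by omega)
    have h4 : ((p-1).choose k : ZMod p) + ((p-1).choose (k+1) : ZMod p) = 0 := by
      rw [← Nat.cast_add, h1, h2]
    rw [h3] at h4
    rw [pow_succ]
    linear_combination h4

lemma choose_p_eq (p k : ℕ) (hp : p.Prime) (hk0 : 0 < k) (hk : k < p) :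
    (p.choose k : ZMod (p^2)) = (p : ZMod (p^2)) * (-1)^(k-1) * ((k : ZMod (p^2)))⁻¹ := by
  have hcop : k.Coprime p := ((hp.coprime_iff_not_dvd).mpr (Nat.not_dvd_of_pos_of_lt hk0 hk)).symm
  have hcop2 : k.Coprime (p^2) := hcop.pow_right 2
  have hinv : (k : ZMod (p^2)) * ((k : ZMod (p^2)))⁻¹ = 1 := ZMod.coe_mul_inv_eq_one k hcop2
  -- nat identity
  have hid : p * (p-1).choose (k-1) = p.choose k * k := by
    have h := Nat.add_one_mul_choose_eq (p-1) (k-1)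
    have e1 : p - 1 + 1 = p := Nat.succ_pred_eq_of_pos hp.pos
    have e2 : k - 1 + 1 = k := Nat.succ_pred_eq_of_pos hk0
    simp only [Nat.succ_eq_add_one, e1, e2] at h
    exact h
  -- choose pred mod p, as int
  have h1 : (((p-1).choose (k-1) : ℤ) - (-1)^(k-1)) % p = 0 := by
    have := choose_pred_eq p hp (k-1) (by omega)
    have h2 : ((((p-1).choose (k-1) : ℤ) - (-1)^(k-1) : ℤ) : ZMod p) = 0 := by
      push_cast
      rw [this]
      ring
    rw [ZMod.intCast_zmod_eq_zero_iff_dvd] at h2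
    omega
  obtain ⟨c, hc⟩ : ∃ c : ℤ, ((p-1).choose (k-1) : ℤ) = (-1)^(k-1) + p * c := by
    refine ⟨(((p-1).choose (k-1) : ℤ) - (-1)^(k-1)) / p, ?_⟩
    have := Int.mul_ediv_add_emod (((p-1).choose (k-1) : ℤ) - (-1)^(k-1)) p
    rw [h1] at this
    linarith
  have hpp : (p : ZMod (p^2)) * (p : ZMod (p^2)) = 0 := by
    have : ((p*p : ℕ) : ZMod (p^2)) = 0 := by
      rw [ZMod.natCast_eq_zero_iff, pow_two]
    push_cast at this
    exact this
  have key : (p.choose k : ZMod (p^2)) * (k : ZMod (p^2)) = (p : ZMod (p^2)) * (-1)^(k-1) := by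
    have h3 : ((p * (p-1).choose (k-1) : ℕ) : ZMod (p^2)) = ((p.choose k * k : ℕ) : ZMod (p^2)) := by
      rw [hid]
    push_cast at h3
    have h4 : (((p-1).choose (k-1) : ℕ) : ZMod (p^2)) = (-1)^(k-1) + (p : ZMod (p^2)) * (c : ZMod (p^2)) := by
      have := congrArg (fun z : ℤ => (z : ZMod (p^2))) hc
      push_cast at this
      exact this
    rw [h4] at h3
    rw [← h3]
    linear_combination (c : ZMod (p^2)) * hpp
  calc (p.choose k : ZMod (p^2)) = (p.choose k : ZMod (p^2)) * ((k : ZMod (p^2)) * ((k : ZMod (p^2)))⁻¹) := by rw [hinv, mul_one]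
    _ = ((p.choose k : ZMod (p^2)) * (k : ZMod (p^2))) * ((k : ZMod (p^2)))⁻¹ := by ring
    _ = (p : ZMod (p^2)) * (-1)^(k-1) * ((k : ZMod (p^2)))⁻¹ := by rw [key]

lemma pow_two_p (p : ℕ) (hp : p.Prime) :
    (2 : ZMod (p ^ 2)) ^ p
        = 2 + (p : ZMod (p ^ 2)) *
            ((∑ i ∈ (Finset.Ioo 0 p).filter (fun i => Odd i), ((i : ZMod (p ^ 2)))⁻¹)
              - (∑ i ∈ (Finset.Ioo 0 p).filter (fun i => Even i), ((i : ZMod (p ^ 2)))⁻¹)) := by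
  have hp0 : 0 < p := hp.pos
  have hrange : Finset.range p = insert 0 (Finset.Ioo 0 p) := by
    ext x
    simp only [Finset.mem_range, Finset.mem_insert, Finset.mem_Ioo]
    omega
  have h0 : (2 : ZMod (p ^ 2)) ^ p = ∑ k ∈ Finset.range (p+1), (p.choose k : ZMod (p^2)) := by
    rw [← Nat.cast_sum, Nat.sum_range_choose]
    push_cast
    ring
  rw [h0, Finset.sum_range_succ, hrange, Finset.sum_insert (by simp)]
  have hmid : ∑ k ∈ Finset.Ioo 0 p, (p.choose k : ZMod (p^2))
      = (p : ZMod (p ^ 2)) *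
            ((∑ i ∈ (Finset.Ioo 0 p).filter (fun i => Odd i), ((i : ZMod (p ^ 2)))⁻¹)
              - (∑ i ∈ (Finset.Ioo 0 p).filter (fun i => Even i), ((i : ZMod (p ^ 2)))⁻¹)) := by
    rw [← Finset.sum_filter_add_sum_filter_not (Finset.Ioo 0 p) (fun i => Odd i)]
    have hodd' : ∑ k ∈ (Finset.Ioo 0 p).filter (fun i => Odd i), (p.choose k : ZMod (p^2))
        = ∑ k ∈ (Finset.Ioo 0 p).filter (fun i => Odd i), ((k : ZMod (p ^ 2)))⁻¹ * (p : ZMod (p^2)) := by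
      refine Finset.sum_congr rfl ?_
      intro k hk
      simp only [Finset.mem_filter, Finset.mem_Ioo] at hk
      rw [choose_p_eq p k hp hk.1.1 hk.1.2]
      have : Even (k - 1) := Nat.Odd.sub_odd hk.2 odd_one
      rw [this.neg_one_pow]
      ring
    have heven' : ∑ k ∈ (Finset.Ioo 0 p).filter (fun i => ¬ Odd i), (p.choose k : ZMod (p^2))
        = ∑ k ∈ (Finset.Ioo 0 p).filter (fun i => ¬ Odd i), -(((k : ZMod (p ^ 2)))⁻¹ * (p : ZMod (p^2))) := by
      refine Finset.sum_congr rfl ?_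
      intro k hk
      simp only [Finset.mem_filter, Finset.mem_Ioo, Nat.not_odd_iff_even] at hk
      rw [choose_p_eq p k hp hk.1.1 hk.1.2]
      have : Odd (k - 1) := Nat.Even.sub_odd hk.1.1 hk.2 odd_one
      rw [this.neg_one_pow]
      ring
    have hfe : (Finset.Ioo 0 p).filter (fun i => ¬ Odd i) = (Finset.Ioo 0 p).filter (fun i => Even i) := by
      simp [Nat.not_odd_iff_even]
    rw [hodd', heven', hfe, Finset.sum_neg_distrib, ← Finset.sum_mul, ← Finset.sum_mul]
    ring
  rw [hmid]
  simp [Nat.choose_self]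
  ring

lemma sum_inv_zero (p : ℕ) (hp : p.Prime) (hodd : Odd p) :
    ∑ i ∈ Finset.Ioo 0 p, ((i : ZMod p))⁻¹ = 0 := by
  haveI : Fact p.Prime := ⟨hp⟩
  have hp2 : p ≠ 2 := by
    rintro rfl
    rw [Nat.odd_iff] at hodd
    omega
  have h2ne : (2 : ZMod p) ≠ 0 := by
    intro h
    have : ((2 : ℕ) : ZMod p) = 0 := by exact_mod_cast h
    rw [ZMod.natCast_eq_zero_iff] at this
    exact hp2 ((Nat.prime_dvd_prime_iff_eq hp Nat.prime_two).mp this)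
  have hneg : ∑ i ∈ Finset.Ioo 0 p, ((i : ZMod p))⁻¹
      = ∑ i ∈ Finset.Ioo 0 p, -((i : ZMod p))⁻¹ := by
    refine Finset.sum_nbij' (fun k => p - k) (fun k => p - k) ?_ ?_ ?_ ?_ ?_
    · intro a ha; simp only [Finset.mem_Ioo] at *; omega
    · intro a ha; simp only [Finset.mem_Ioo] at *; omega
    · intro a ha; simp only [Finset.mem_Ioo] at ha; show p - (p - a) = a; omega
    · intro a ha; simp only [Finset.mem_Ioo] at ha; show p - (p - a) = a; omega
    · intro a ha
      simp only [Finset.mem_Ioo] at ha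
      have : ((p - a : ℕ) : ZMod p) = -(a : ZMod p) := by
        rw [Nat.cast_sub (le_of_lt ha.2), ZMod.natCast_self]
        ring
      rw [this, inv_neg, neg_neg]
  have h2S : (2 : ZMod p) * ∑ i ∈ Finset.Ioo 0 p, ((i : ZMod p))⁻¹ = 0 := by
    rw [Finset.sum_neg_distrib] at hneg
    linear_combination hneg
  rcases mul_eq_zero.mp h2S with h | h
  · exact absurd h h2ne
  · exact h

lemma cast_inv (p i : ℕ) (hp : p.Prime) (h0 : 0 < i) (hi : i < p) :
    (ZMod.castHom (dvd_pow_self p two_ne_zero) (ZMod p)) ((i : ZMod (p^2))⁻¹)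
      = ((i : ZMod p))⁻¹ := by
  haveI : Fact p.Prime := ⟨hp⟩
  have hcop : i.Coprime p := ((hp.coprime_iff_not_dvd).mpr (Nat.not_dvd_of_pos_of_lt h0 hi)).symm
  have h1 : (i : ZMod (p^2)) * ((i : ZMod (p^2)))⁻¹ = 1 := ZMod.coe_mul_inv_eq_one i (hcop.pow_right 2)
  have h2 := congrArg (ZMod.castHom (dvd_pow_self p two_ne_zero) (ZMod p)) h1
  rw [map_mul, map_natCast, map_one] at h2
  exact eq_inv_of_mul_eq_one_right h2

lemma pmul_eq_zero_iff (p : ℕ) (hp : p.Prime) (a : ZMod (p^2)) :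
    (p : ZMod (p^2)) * a = 0 ↔
      (ZMod.castHom (dvd_pow_self p two_ne_zero) (ZMod p)) a = 0 := by
  haveI : NeZero (p^2) := ⟨pow_ne_zero 2 hp.ne_zero⟩
  have ha : ((a.val : ℕ) : ZMod (p^2)) = a := ZMod.natCast_rightInverse a
  have hmul : (p : ZMod (p^2)) * a = ((p * a.val : ℕ) : ZMod (p^2)) := by
    rw [Nat.cast_mul, ha]
  have hcast : (ZMod.castHom (dvd_pow_self p two_ne_zero) (ZMod p)) a
      = ((a.val : ℕ) : ZMod p) := by
    conv_lhs => rw [← ha]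
    rw [map_natCast]
  rw [hmul, hcast, ZMod.natCast_eq_zero_iff, ZMod.natCast_eq_zero_iff]
  constructor
  · intro h
    refine (Nat.mul_dvd_mul_iff_left hp.pos).mp ?_
    have h2 : p * p = p ^ 2 := by ring
    rw [h2]
    exact h
  · intro h
    have h2 : p ^ 2 = p * p := by ring
    calc p ^ 2 = p * p := h2
      _ ∣ p * a.val := Nat.mul_dvd_mul_left p h

theorem two_S1_eq_two_q (p : ℕ) (hp : p.Prime) (hodd : Odd p) :
    (2 * ∑ i ∈ (Finset.Ioo 0 p).filter (fun i => Odd i), ((i : ZMod p))⁻¹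
        = 2 * (((2 ^ (p - 1) - 1) / p : ℕ) : ZMod p)) ∧
    ((2 : ZMod (p ^ 2)) ^ p
        = 2 + (p : ZMod (p ^ 2)) *
            ((∑ i ∈ (Finset.Ioo 0 p).filter (fun i => Odd i), ((i : ZMod (p ^ 2)))⁻¹)
              - (∑ i ∈ (Finset.Ioo 0 p).filter (fun i => Even i), ((i : ZMod (p ^ 2)))⁻¹))) := by
  haveI : Fact p.Prime := ⟨hp⟩
  refine ⟨?_, pow_two_p p hp⟩
  set q : ℕ := (2 ^ (p - 1) - 1) / p with hq_def
  have hp0 : 0 < p := hp.pos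
  have hp2 : p ≠ 2 := by rintro rfl; rw [Nat.odd_iff] at hodd; omega
  have h2ne : (2 : ZMod p) ≠ 0 := by
    intro h
    have h' : ((2 : ℕ) : ZMod p) = 0 := by exact_mod_cast h
    rw [ZMod.natCast_eq_zero_iff] at h'
    exact hp2 ((Nat.prime_dvd_prime_iff_eq hp Nat.prime_two).mp h')
  have hle : 1 ≤ 2 ^ (p - 1) := Nat.one_le_two_pow
  have hdvd : p ∣ 2 ^ (p - 1) - 1 := by
    have hfer : (2 : ZMod p) ^ (p - 1) = 1 := ZMod.pow_card_sub_one_eq_one h2ne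
    have hz : ((2 ^ (p - 1) - 1 : ℕ) : ZMod p) = 0 := by
      rw [Nat.cast_sub hle]
      push_cast
      rw [hfer]
      ring
    exact (ZMod.natCast_eq_zero_iff _ p).mp hz
  have hq : p * q = 2 ^ (p - 1) - 1 := Nat.mul_div_cancel' hdvd
  have h2p : (2 : ℕ) ^ p = 2 * 2 ^ (p - 1) := by
    conv_lhs => rw [show p = (p - 1) + 1 by omega]
    rw [pow_succ']
  have hmul : p * (2 * q) = 2 * (p * q) := by ring
  have hnat : 2 ^ p = 2 + p * (2 * q) := by omega
  -- p^2 side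
  set S1 := ∑ i ∈ (Finset.Ioo 0 p).filter (fun i => Odd i), ((i : ZMod (p ^ 2)))⁻¹ with hS1
  set S0 := ∑ i ∈ (Finset.Ioo 0 p).filter (fun i => Even i), ((i : ZMod (p ^ 2)))⁻¹ with hS0
  have hA : (2 : ZMod (p ^ 2)) ^ p = 2 + (p : ZMod (p ^ 2)) * (S1 - S0) := pow_two_p p hp
  have hB : (2 : ZMod (p ^ 2)) ^ p = 2 + (p : ZMod (p ^ 2)) * ((2 * q : ℕ) : ZMod (p ^ 2)) := by
    have := congrArg (fun n : ℕ => (n : ZMod (p ^ 2))) hnat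
    push_cast at this
    exact_mod_cast this
  have hkey : (p : ZMod (p ^ 2)) * ((S1 - S0) - ((2 * q : ℕ) : ZMod (p ^ 2))) = 0 := by
    rw [mul_sub]
    rw [hA] at hB
    linear_combination hB
  rw [pmul_eq_zero_iff p hp] at hkey
  set f := ZMod.castHom (dvd_pow_self p two_ne_zero) (ZMod p) with hf
  have hfS1 : f S1 = ∑ i ∈ (Finset.Ioo 0 p).filter (fun i => Odd i), ((i : ZMod p))⁻¹ := by
    rw [hS1, map_sum]
    refine Finset.sum_congr rfl ?_
    intro i hi
    simp only [Finset.mem_filter, Finset.mem_Ioo] at hi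
    exact cast_inv p i hp hi.1.1 hi.1.2
  have hfS0 : f S0 = ∑ i ∈ (Finset.Ioo 0 p).filter (fun i => Even i), ((i : ZMod p))⁻¹ := by
    rw [hS0, map_sum]
    refine Finset.sum_congr rfl ?_
    intro i hi
    simp only [Finset.mem_filter, Finset.mem_Ioo] at hi
    exact cast_inv p i hp hi.1.1 hi.1.2
  rw [map_sub, map_sub, map_natCast, hfS1, hfS0, sub_eq_zero] at hkey
  -- mod p side: sum of all inverses is zero
  have hsum0 : (∑ i ∈ (Finset.Ioo 0 p).filter (fun i => Odd i), ((i : ZMod p))⁻¹)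
      + (∑ i ∈ (Finset.Ioo 0 p).filter (fun i => Even i), ((i : ZMod p))⁻¹) = 0 := by
    have hfe : (Finset.Ioo 0 p).filter (fun i => ¬ Odd i)
        = (Finset.Ioo 0 p).filter (fun i => Even i) := by
      simp [Nat.not_odd_iff_even]
    rw [← hfe, Finset.sum_filter_add_sum_filter_not]
    exact sum_inv_zero p hp hodd
  have hfinal : ((2 * q : ℕ) : ZMod p) = 2 * (q : ZMod p) := by push_cast; ring
  rw [hfinal] at hkey
  linear_combination hkey + hsum0
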